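/- For ψ(x) = |x−y₂|⁻² − |x−y₁|⁻² − a with a < 0, at any point x of the level set {ψ = 0} and any unit vector τ orthogonal to ∇ψ(x) with (x−y₁)·τ ≠ 0 or a strict case, one has ∂²_{ττ}ψ(x) > 0. -/

import Mathlib

/-!
Along the line `x + t • τ`, each `‖x + t • τ - y‖ ^ 2` is the quadratic `r ^ 2 + 2 * c * t + t ^ 2`
with `r = ‖x - y‖` and `c = ⟪x - y, τ⟫`, and the second derivative of its reciprocal at `0` is
`(8 * c ^ 2 - 2 * r ^ 2) / r ^ 6`. Tangency of `τ` says `c₁ / r₁ ^ 4 = c₂ / r₂ ^ 4 = k`, so the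
tangential second derivative of `ψ` is `2 / r₁ ^ 4 - 2 / r₂ ^ 4 + 8 * k ^ 2 * (r₂ ^ 2 - r₁ ^ 2)`,
and `a < 0` on the level set means exactly `r₁ < r₂`.
-/

open Filter Topology

lemma norm_add_smul_sub_sq {E : Type*} [NormedAddCommGroup E] [InnerProductSpace ℝ E]
    {τ : E} (hτ : ‖τ‖ = 1) (x y : E) (t : ℝ) :
    ‖x + t • τ - y‖ ^ 2 = ‖x - y‖ ^ 2 + 2 * inner ℝ (x - y) τ * t + t ^ 2 := by
  rw [show x + t • τ - y = (x - y) + t • τ by abel, norm_add_sq_real, real_inner_smul_right,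
    norm_smul, hτ, Real.norm_eq_abs, mul_one, sq_abs]
  ring

noncomputable def invQuad (r c t : ℝ) : ℝ := (r ^ 2 + 2 * c * t + t ^ 2)⁻¹

lemma hasDerivAt_quadratic (r c t : ℝ) :
    HasDerivAt (fun s : ℝ => r ^ 2 + 2 * c * s + s ^ 2) (2 * c + 2 * t) t := by
  have hlin : HasDerivAt (fun s : ℝ => r ^ 2 + 2 * c * s) (2 * c) t := by
    simpa using ((hasDerivAt_id t).const_mul (2 * c)).const_add (r ^ 2)
  have hsq : HasDerivAt (fun s : ℝ => s ^ 2) (2 * t) t := by simpa using hasDerivAt_pow 2 t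
  exact hlin.add hsq

lemma eventually_hasDerivAt_invQuad {r : ℝ} (hr : r ≠ 0) (c : ℝ) :
    ∀ᶠ t in 𝓝 (0 : ℝ), HasDerivAt (invQuad r c)
      (-(2 * c + 2 * t) / (r ^ 2 + 2 * c * t + t ^ 2) ^ 2) t := by
  have hq : ContinuousAt (fun t : ℝ => r ^ 2 + 2 * c * t + t ^ 2) 0 := by fun_prop
  filter_upwards [hq.eventually_ne (by norm_num [hr] : r ^ 2 + 2 * c * 0 + 0 ^ 2 ≠ 0)] with t ht
  exact (hasDerivAt_quadratic r c t).inv ht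

lemma hasDerivAt_deriv_invQuad_zero {r : ℝ} (hr : r ≠ 0) (c : ℝ) :
    HasDerivAt (deriv (invQuad r c)) ((8 * c ^ 2 - 2 * r ^ 2) / r ^ 6) 0 := by
  have hderiv : deriv (invQuad r c) =ᶠ[𝓝 0]
      fun t => -(2 * c + 2 * t) / (r ^ 2 + 2 * c * t + t ^ 2) ^ 2 :=
    (eventually_hasDerivAt_invQuad hr c).mono fun _ h => h.deriv
  have hnum : HasDerivAt (fun t : ℝ => -(2 * c + 2 * t)) (-2) 0 := by
    have hlin : HasDerivAt (fun t : ℝ => 2 * c + 2 * t) 2 0 := by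
      simpa using ((hasDerivAt_id (0 : ℝ)).const_mul 2).const_add (2 * c)
    exact hlin.neg
  have hden := (hasDerivAt_quadratic r c 0).fun_pow 2
  have h := (hnum.fun_div hden (by simpa using hr)).congr_of_eventuallyEq hderiv
  refine h.congr_deriv ?_
  norm_num
  field_simp
  ring

lemma hasDerivAt_deriv_sub_sub_const {f g : ℝ → ℝ} {x₀ f'' g'' : ℝ} (a : ℝ)
    (hf : ∀ᶠ t in 𝓝 x₀, DifferentiableAt ℝ f t) (hg : ∀ᶠ t in 𝓝 x₀, DifferentiableAt ℝ g t)
    (hf'' : HasDerivAt (deriv f) f'' x₀) (hg'' : HasDerivAt (deriv g) g'' x₀) :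
    HasDerivAt (deriv fun t => f t - g t - a) (f'' - g'') x₀ := by
  have hderiv : deriv (fun t => f t - g t - a) =ᶠ[𝓝 x₀] fun t => deriv f t - deriv g t := by
    filter_upwards [hf, hg] with t hft hgt
    rw [deriv_sub_const]
    exact deriv_sub hft hgt
  exact (hf''.sub hg'').congr_of_eventuallyEq hderiv

lemma second_deriv_invQuad_sub_pos {r₁ r₂ c₁ c₂ : ℝ} (hr₁ : 0 < r₁) (hr : r₁ < r₂)
    (hc : c₁ / r₁ ^ 4 = c₂ / r₂ ^ 4) :
    0 < (8 * c₂ ^ 2 - 2 * r₂ ^ 2) / r₂ ^ 6 - (8 * c₁ ^ 2 - 2 * r₁ ^ 2) / r₁ ^ 6 := by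
  have hr₂ : 0 < r₂ := hr₁.trans hr
  obtain ⟨k, hk⟩ : ∃ k, c₁ / r₁ ^ 4 = k := ⟨_, rfl⟩
  have hc₁ : c₁ = k * r₁ ^ 4 := by rw [← hk]; field_simp
  have hc₂ : c₂ = k * r₂ ^ 4 := by rw [← hk, hc]; field_simp
  have hsplit : (8 * c₂ ^ 2 - 2 * r₂ ^ 2) / r₂ ^ 6 - (8 * c₁ ^ 2 - 2 * r₁ ^ 2) / r₁ ^ 6
      = 2 * (r₂ ^ 4 - r₁ ^ 4) / (r₁ ^ 4 * r₂ ^ 4) + 8 * k ^ 2 * (r₂ ^ 2 - r₁ ^ 2) := by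
    rw [hc₁, hc₂]
    field_simp
    ring
  have h4 : r₁ ^ 4 < r₂ ^ 4 := by gcongr
  have h2 : r₁ ^ 2 < r₂ ^ 2 := by gcongr
  rw [hsplit]
  exact add_pos_of_pos_of_nonneg (div_pos (by linarith) (by positivity))
    (mul_nonneg (by positivity) (by linarith))

theorem sublevel_tangential_hessian_pos_general {d : ℕ}
    (y₁ y₂ x τ : EuclideanSpace ℝ (Fin d)) (a : ℝ)
    (ha : a < 0) (hx1 : x ≠ y₁) (hx2 : x ≠ y₂)
    (hψ0 : (‖x - y₂‖ ^ 2)⁻¹ - (‖x - y₁‖ ^ 2)⁻¹ = a)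
    (hτ : ‖τ‖ = 1)
    (horth : (inner ℝ τ ((2 / ‖x - y₁‖ ^ 4) • (x - y₁) - (2 / ‖x - y₂‖ ^ 4) • (x - y₂)) : ℝ) = 0) :
    0 < deriv (deriv (fun t : ℝ =>
      (‖x + t • τ - y₂‖ ^ 2)⁻¹ - (‖x + t • τ - y₁‖ ^ 2)⁻¹ - a)) 0 := by
  have hr₁ : 0 < ‖x - y₁‖ := norm_pos_iff.mpr (sub_ne_zero.mpr hx1)
  have hr₂ : 0 < ‖x - y₂‖ := norm_pos_iff.mpr (sub_ne_zero.mpr hx2)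
  have hline : (fun t : ℝ => (‖x + t • τ - y₂‖ ^ 2)⁻¹ - (‖x + t • τ - y₁‖ ^ 2)⁻¹ - a) =
      fun t => invQuad ‖x - y₂‖ (inner ℝ (x - y₂) τ) t
        - invQuad ‖x - y₁‖ (inner ℝ (x - y₁) τ) t - a := by
    funext t
    rw [norm_add_smul_sub_sq hτ, norm_add_smul_sub_sq hτ, invQuad, invQuad]
  have hr : ‖x - y₁‖ < ‖x - y₂‖ := by
    have : (‖x - y₂‖ ^ 2)⁻¹ < (‖x - y₁‖ ^ 2)⁻¹ := by linarith
    rw [inv_lt_inv₀ (by positivity) (by positivity)] at this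
    exact lt_of_pow_lt_pow_left₀ 2 hr₂.le this
  have hc : inner ℝ (x - y₁) τ / ‖x - y₁‖ ^ 4 = inner ℝ (x - y₂) τ / ‖x - y₂‖ ^ 4 := by
    rw [inner_sub_right, real_inner_smul_right, real_inner_smul_right,
      real_inner_comm (x - y₁), real_inner_comm (x - y₂)] at horth
    linear_combination horth / 2
  rw [hline, (hasDerivAt_deriv_sub_sub_const a
    ((eventually_hasDerivAt_invQuad hr₂.ne' _).mono fun _ h => h.differentiableAt)
    ((eventually_hasDerivAt_invQuad hr₁.ne' _).mono fun _ h => h.differentiableAt)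
    (hasDerivAt_deriv_invQuad_zero hr₂.ne' _) (hasDerivAt_deriv_invQuad_zero hr₁.ne' _)).deriv]
  exact second_deriv_invQuad_sub_pos hr₁ hr hc

/-- For ψ(x) = |x−y₂|⁻² − |x−y₁|⁻² − a with a < 0, at any point of {ψ = 0},
the second derivative of ψ in a unit direction τ orthogonal to ∇ψ(x) is positive. -/
theorem sublevel_tangential_hessian_pos {d : ℕ}
    (y₁ y₂ x τ : EuclideanSpace ℝ (Fin d)) (a : ℝ)
    (hy : y₁ ≠ y₂) (ha : a < 0) (hx1 : x ≠ y₁) (hx2 : x ≠ y₂)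
    (hψ0 : (‖x - y₂‖ ^ 2)⁻¹ - (‖x - y₁‖ ^ 2)⁻¹ = a)
    (hτ : ‖τ‖ = 1)
    (horth : (inner ℝ τ ((2 / ‖x - y₁‖ ^ 4) • (x - y₁) - (2 / ‖x - y₂‖ ^ 4) • (x - y₂)) : ℝ) = 0) :
    0 < deriv (deriv (fun t : ℝ =>
      (‖x + t • τ - y₂‖ ^ 2)⁻¹ - (‖x + t • τ - y₁‖ ^ 2)⁻¹ - a)) 0 :=
  sublevel_tangential_hessian_pos_general y₁ y₂ x τ a ha hx1 hx2 hψ0 hτ horth
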